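/- Let z be a random vector in ℝ^d with second-moment matrix M := E[z zᵀ] ≠ 0, and suppose there exist a unit vector u⋆ ∈ ℝ^d and constants p₀ ∈ (0,1), c₀ > 0 satisfying the small-ball condition P(⟨z,u⋆⟩² ≥ c₀‖M‖_op) ≥ p₀. Let z_1,…,z_n be iid copies of z and Z_n := [z_1,…,z_n] ∈ ℝ^{d×n}. Then for any c ∈ (0,1/2), provided n ≥ (8/p₀)·log(1/c), with probability at least 1 − 2c one has Z_n ≠ 0 and st(Z_n) ≤ (2/(p₀ c₀ c)) · er(M). -/

import Mathlib

/-!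
Write `z_t` for the columns of `Z` and `θ = c₀‖M‖_op`. Since `E‖Z‖_F² = n tr M`, Markov's
inequality gives `‖Z‖_F² < n tr M / c` outside an event of probability `c`. The indicators of
`⟨z_t, u⋆⟩² ≥ θ` are independent with mean at least `p₀`, so by a Chernoff bound at least `p₀n/2`
of them equal one outside an event of probability `exp (-p₀n/8) ≤ c`. On the remaining event
`‖Z‖_op² ≥ ‖Zᵀu⋆‖² = ∑ₜ ⟨z_t, u⋆⟩² ≥ (p₀n/2) θ`; in particular `Z ≠ 0`, and
`st(Z) ≤ (n tr M / c) / ((p₀n/2) θ) = (2 / (p₀c₀c)) · er(M)`.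
-/

open MeasureTheory ProbabilityTheory

noncomputable section

/-- Squared Frobenius norm of a real matrix. -/
def frobSq {m n : Type*} [Fintype m] [Fintype n] (A : Matrix m n ℝ) : ℝ :=
  ∑ i, ∑ j, (A i j) ^ 2

/-- Spectral (largest-singular-value) norm of a real matrix. -/
def opNorm {m n : Type*} [Fintype m] [Fintype n] [DecidableEq n] (A : Matrix m n ℝ) : ℝ :=
  ‖LinearMap.toContinuousLinearMap (Matrix.toEuclideanLin A)‖

/-- Stable rank `st(A) = ‖A‖_F² / ‖A‖_op²`. -/
def stRank {m n : Type*} [Fintype m] [Fintype n] [DecidableEq n] (A : Matrix m n ℝ) : ℝ :=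
  frobSq A / (opNorm A) ^ 2

open Finset Matrix
open scoped Matrix.Norms.L2Operator

lemma card_filter_mul_le_sum {τ : Type*} (s : Finset τ) (q : τ → Prop) [DecidablePred q]
    {f : τ → ℝ} (hf : ∀ t ∈ s, 0 ≤ f t) {θ : ℝ} (hq : ∀ t ∈ s, q t → θ ≤ f t) :
    #{t ∈ s | q t} * θ ≤ ∑ t ∈ s, f t :=
  calc #{t ∈ s | q t} * θ = ∑ t ∈ s with q t, θ := by rw [sum_const, nsmul_eq_mul]
    _ ≤ ∑ t ∈ s with q t, f t :=
      sum_le_sum fun t ht => hq t (mem_filter.mp ht).1 (mem_filter.mp ht).2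
    _ ≤ ∑ t ∈ s, f t := sum_le_sum_of_subset_of_nonneg (filter_subset _ _) fun t ht _ => hf t ht

section Deterministic

variable {m n : Type*} [Fintype m] [Fintype n] [DecidableEq n]

lemma opNorm_eq_l2_opNorm (A : Matrix m n ℝ) : opNorm A = ‖A‖ := rfl

lemma opNorm_pos {A : Matrix m n ℝ} (hA : A ≠ 0) : 0 < opNorm A := by
  rw [opNorm_eq_l2_opNorm]
  exact norm_pos_iff.mpr hA

lemma sum_sq_vecMul_le_opNorm_sq (A : Matrix m n ℝ) {u : m → ℝ} (hu : ∑ a, u a ^ 2 = 1) :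
    ∑ t, (u ᵥ* A) t ^ 2 ≤ opNorm A ^ 2 := by
  classical
  have hunit : ‖(EuclideanSpace.equiv m ℝ).symm u‖ = 1 := by
    simp [EuclideanSpace.norm_eq, hu]
  have hAt := Aᴴ.l2_opNorm_mulVec ((EuclideanSpace.equiv m ℝ).symm u)
  rw [l2_opNorm_conjTranspose, hunit, mul_one, conjTranspose_eq_transpose_of_trivial,
    mulVec_transpose, ← opNorm_eq_l2_opNorm] at hAt
  have hsq := pow_le_pow_left₀ (norm_nonneg _) hAt 2
  rwa [EuclideanSpace.real_norm_sq_eq] at hsq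

lemma ne_zero_and_stRank_le {A : Matrix m n ℝ} {u : m → ℝ} (hu : ∑ a, u a ^ 2 = 1)
    {U θ k : ℝ} (hθ : 0 < θ) (hk : 0 < k) (hF : frobSq A ≤ U) (q : n → Prop) [DecidablePred q]
    (hq : ∀ t, q t → θ ≤ (u ᵥ* A) t ^ 2) (hcard : k ≤ #{t | q t}) :
    A ≠ 0 ∧ stRank A ≤ U / (k * θ) := by
  have hop : k * θ ≤ opNorm A ^ 2 :=
    calc k * θ ≤ #{t | q t} * θ := mul_le_mul_of_nonneg_right hcard hθ.le
      _ ≤ ∑ t, (u ᵥ* A) t ^ 2 :=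
        card_filter_mul_le_sum _ q (fun t _ => sq_nonneg _) fun t _ => hq t
      _ ≤ opNorm A ^ 2 := sum_sq_vecMul_le_opNorm_sq A hu
  refine ⟨fun h0 => ?_, ?_⟩
  · rw [h0, opNorm_eq_l2_opNorm, norm_zero] at hop
    nlinarith
  · have hF0 : 0 ≤ frobSq A := by unfold frobSq; positivity
    exact div_le_div₀ (hF0.trans hF) hF (mul_pos hk hθ) hop

end Deterministic

section SecondMoment

variable {ι : Type*}

def secondMoment (μ : Measure (ι → ℝ)) : Matrix ι ι ℝ :=
  Matrix.of fun a b => ∫ x, x a * x b ∂μ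

variable {μ : Measure (ι → ℝ)}

lemma abs_secondMoment_apply_le (hmoment : ∀ a b, Integrable (fun x => x a * x b) μ) (a b : ι) :
    |secondMoment μ a b| ≤ (secondMoment μ a a + secondMoment μ b b) / 2 :=
  calc |∫ x, x a * x b ∂μ| ≤ ∫ x, |x a * x b| ∂μ := abs_integral_le_integral_abs
    _ ≤ ∫ x, (x a * x a + x b * x b) / 2 ∂μ := by
      refine integral_mono (hmoment a b).abs (((hmoment a a).add (hmoment b b)).div_const 2)
        fun x => ?_
      rw [abs_mul]
      nlinarith [sq_nonneg (|x a| - |x b|), abs_mul_abs_self (x a), abs_mul_abs_self (x b)]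
    _ = (secondMoment μ a a + secondMoment μ b b) / 2 := by
      rw [integral_div, integral_add (hmoment a a) (hmoment b b)]
      rfl

lemma trace_secondMoment_pos [Fintype ι] (hmoment : ∀ a b, Integrable (fun x => x a * x b) μ)
    (hμ : secondMoment μ ≠ 0) : 0 < trace (secondMoment μ) := by
  have hdiag : ∀ a, 0 ≤ secondMoment μ a a := fun a => integral_nonneg fun x => mul_self_nonneg _
  refine (sum_nonneg fun a _ => hdiag a : 0 ≤ trace (secondMoment μ)).lt_of_ne fun htr => hμ ?_
  have hdiag0 : ∀ a, secondMoment μ a a = 0 := fun a =>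
    (sum_eq_zero_iff_of_nonneg fun a _ => hdiag a).mp htr.symm a (mem_univ a)
  ext a b
  simpa [hdiag0] using abs_secondMoment_apply_le hmoment a b

end SecondMoment

section Columns

variable {Ω ι τ : Type*} [MeasurableSpace Ω] [Fintype ι] {P : Measure Ω}
  {zs : τ → Ω → ι → ℝ} {μ : Measure (ι → ℝ)}

lemma integrable_mul_self_apply_of_map_eq (hmeas : ∀ t, Measurable (zs t))
    (hlaw : ∀ t, P.map (zs t) = μ) (hmoment : ∀ a, Integrable (fun x => x a * x a) μ)
    (t : τ) (a : ι) : Integrable (fun ω => zs t ω a * zs t ω a) P :=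
  (integrable_map_measure (g := fun x : ι → ℝ => x a * x a) (by fun_prop)
    (hmeas t).aemeasurable).mp (hlaw t ▸ hmoment a)

lemma integrable_frobSq_of_map_eq [Fintype τ] (hmeas : ∀ t, Measurable (zs t))
    (hlaw : ∀ t, P.map (zs t) = μ) (hmoment : ∀ a, Integrable (fun x => x a * x a) μ) :
    Integrable (fun ω => frobSq (Matrix.of fun a t => zs t ω a)) P := by
  simp only [frobSq, of_apply, sq]
  exact integrable_finsetSum _ fun a _ => integrable_finsetSum _ fun t _ =>
    integrable_mul_self_apply_of_map_eq hmeas hlaw hmoment t a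

lemma integral_frobSq_of_map_eq [Fintype τ] (hmeas : ∀ t, Measurable (zs t))
    (hlaw : ∀ t, P.map (zs t) = μ) (hmoment : ∀ a, Integrable (fun x => x a * x a) μ) :
    ∫ ω, frobSq (Matrix.of fun a t => zs t ω a) ∂P = Fintype.card τ * trace (secondMoment μ) := by
  have hint := integrable_mul_self_apply_of_map_eq hmeas hlaw hmoment
  have hentry : ∀ t a, ∫ ω, zs t ω a * zs t ω a ∂P = secondMoment μ a a := fun t a => by
    rw [secondMoment, of_apply, ← hlaw t, integral_map (hmeas t).aemeasurable (by fun_prop)]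
  simp only [frobSq, of_apply, sq]
  rw [integral_finsetSum _ fun a _ => integrable_finsetSum _ fun t _ => hint t a]
  simp_rw [integral_finsetSum _ fun t _ => hint t _, hentry, sum_const, card_univ, trace,
    diag_apply, nsmul_eq_mul, mul_sum]

end Columns

lemma measure_integral_div_le_le {Ω : Type*} [MeasurableSpace Ω] {P : Measure Ω}
    [IsFiniteMeasure P] {f : Ω → ℝ} (hf0 : 0 ≤ f) (hf : Integrable f P) (hpos : 0 < ∫ ω, f ω ∂P)
    {c : ℝ} (hc : 0 < c) : P {ω | (∫ ω, f ω ∂P) / c ≤ f ω} ≤ ENNReal.ofReal c := by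
  have hmarkov := mul_meas_ge_le_integral_of_nonneg (ae_of_all _ hf0) hf ((∫ ω, f ω ∂P) / c)
  rw [← ofReal_measureReal]
  refine ENNReal.ofReal_le_ofReal (le_of_mul_le_mul_left ?_ (div_pos hpos hc))
  rwa [div_mul_cancel₀ _ hc.ne']

section Chernoff

open Real

lemma exp_mul_indicator_one {Ω : Type*} (s : Set Ω) (t : ℝ) (ω : Ω) :
    exp (t * s.indicator 1 ω) = 1 + (exp t - 1) * s.indicator 1 ω := by
  by_cases hω : ω ∈ s <;> simp [hω]

variable {Ω : Type*} [MeasurableSpace Ω] {P : Measure Ω}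

lemma integrable_exp_mul_indicator_one [IsFiniteMeasure P] {s : Set Ω} (hs : MeasurableSet s)
    (t : ℝ) : Integrable (fun ω => exp (t * s.indicator 1 ω)) P := by
  simp_rw [exp_mul_indicator_one]
  exact (integrable_const 1).add (((integrable_const 1).indicator hs).const_mul _)

lemma mgf_indicator_one [IsProbabilityMeasure P] {s : Set Ω} (hs : MeasurableSet s) (t : ℝ) :
    mgf (s.indicator 1) P t = 1 + (exp t - 1) * P.real s := by
  simp_rw [mgf, exp_mul_indicator_one]
  rw [integral_add (integrable_const 1) (((integrable_const 1).indicator hs).const_mul _),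
    integral_const_mul, integral_indicator_one hs]
  simp

lemma measure_card_mem_le_le_exp [IsProbabilityMeasure P] {τ α : Type*} [Fintype τ]
    [MeasurableSpace α] {X : τ → Ω → α} (hX : ∀ i, Measurable (X i)) (hind : iIndepFun X P)
    {S : Set α} [DecidablePred (· ∈ S)] (hS : MeasurableSet S) {p : ℝ} (hp0 : 0 ≤ p)
    (hp : ∀ i, ENNReal.ofReal p ≤ P (X i ⁻¹' S)) :
    P {ω | (#{i | X i ω ∈ S} : ℝ) ≤ p * Fintype.card τ / 2} ≤
      ENNReal.ofReal (exp (-(p * Fintype.card τ) / 8)) := by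
  set Y : τ → Ω → ℝ := fun i => (X i ⁻¹' S).indicator 1
  have hYmeas : ∀ i, Measurable (Y i) := fun i => measurable_one.indicator (hX i hS)
  have hYind : iIndepFun Y P := by
    have hYS : Y = fun i => S.indicator 1 ∘ X i := by
      ext i ω
      exact Set.indicator_comp_right (g := (1 : α → ℝ)) (X i)
    rw [hYS]
    exact hind.comp _ fun _ => measurable_one.indicator hS
  have hcount : ∀ ω, (#{i | X i ω ∈ S} : ℝ) = (∑ i, Y i) ω := fun ω => by
    rw [natCast_card_filter, Finset.sum_apply]
    exact sum_congr rfl fun i _ => by by_cases h : X i ω ∈ S <;> simp [Y, h]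
  -- Chernoff's bound at `t = -log 2`, where `mgf (Y i) = 1 - P(X i ∈ S) / 2 ≤ exp (-p / 2)`;
  -- the resulting exponent `(log 2 / 2 - 1 / 2) p n` is at most `-p n / 8` as `log 2 < 3 / 4`.
  have hmgf : ∀ i, mgf (Y i) P (-log 2) ≤ exp (-(p / 2)) := fun i => by
    have hpi : p ≤ P.real (X i ⁻¹' S) :=
      (ENNReal.ofReal_le_iff_le_toReal (measure_ne_top _ _)).mp (hp i)
    rw [mgf_indicator_one (hX i hS), Real.exp_neg, exp_log two_pos]
    linarith [add_one_le_exp (-(p / 2))]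
  have hprod : ∏ i, mgf (Y i) P (-log 2) ≤ exp (-(p / 2)) ^ Fintype.card τ := by
    rw [← card_univ, ← prod_const]
    exact prod_le_prod (fun i _ => mgf_nonneg) fun i _ => hmgf i
  have hchernoff := measure_le_le_exp_mul_mgf (X := ∑ i, Y i) (μ := P)
    (p * Fintype.card τ / 2) (neg_nonpos.mpr (log_nonneg one_le_two))
    (hYind.integrable_exp_mul_sum hYmeas fun i _ => integrable_exp_mul_indicator_one (hX i hS) _)
  rw [hYind.mgf_sum hYmeas] at hchernoff
  have hset : {ω | (#{i | X i ω ∈ S} : ℝ) ≤ p * Fintype.card τ / 2} =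
      {ω | (∑ i, Y i) ω ≤ p * Fintype.card τ / 2} := by
    simp only [hcount]
  rw [hset, ← ofReal_measureReal]
  refine ENNReal.ofReal_le_ofReal (hchernoff.trans ?_)
  refine (mul_le_mul_of_nonneg_left hprod (exp_nonneg _)).trans ?_
  rw [← exp_nat_mul, ← Real.exp_add, exp_le_exp]
  nlinarith [log_two_lt_d9, mul_nonneg hp0 (Nat.cast_nonneg (Fintype.card τ) : (0 : ℝ) ≤ _)]

end Chernoff

lemma ofReal_one_sub_le_measure {Ω : Type*} [MeasurableSpace Ω] {P : Measure Ω}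
    [IsProbabilityMeasure P] {G : Set Ω} {ε : ℝ} (hε : 0 ≤ ε) (h : P Gᶜ ≤ ENNReal.ofReal ε) :
    ENNReal.ofReal (1 - ε) ≤ P G := by
  have hcover : 1 ≤ P G + ENNReal.ofReal ε :=
    calc 1 = P (G ∪ Gᶜ) := by rw [Set.union_compl_self, measure_univ]
      _ ≤ P G + P Gᶜ := measure_union_le _ _
      _ ≤ P G + ENNReal.ofReal ε := by gcongr
  rw [ENNReal.ofReal_sub _ hε, ENNReal.ofReal_one]
  exact tsub_le_iff_right.mpr hcover

lemma exp_neg_mul_div_le_of_div_mul_log_le {k p c N : ℝ} (hk : 0 < k) (hp : 0 < p) (hc : 0 < c)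
    (h : k / p * Real.log (1 / c) ≤ N) : Real.exp (-(p * N) / k) ≤ c := by
  rw [div_mul_eq_mul_div, div_le_iff₀ hp, one_div, Real.log_inv] at h
  calc Real.exp (-(p * N) / k) ≤ Real.exp (Real.log c) :=
        Real.exp_le_exp.mpr (by rw [neg_div, neg_le, le_div_iff₀ hk]; linarith)
    _ = c := Real.exp_log hc

theorem stable_rank_small_ball_general
    {Ω : Type*} [MeasurableSpace Ω] (P : Measure Ω) [IsProbabilityMeasure P]
    (d n : ℕ)
    (μ : Measure (Fin d → ℝ)) [IsProbabilityMeasure μ]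
    (hmoment : ∀ a b : Fin d, Integrable (fun x => x a * x b) μ)
    (M : Matrix (Fin d) (Fin d) ℝ)
    (hM : ∀ a b, M a b = ∫ x, x a * x b ∂μ)
    (hM0 : M ≠ 0)
    (ustar : Fin d → ℝ) (hu : ∑ a, (ustar a) ^ 2 = 1)
    (p₀ c₀ : ℝ) (hp₀ : p₀ ∈ Set.Ioo (0:ℝ) 1) (hc₀ : 0 < c₀)
    (hsb : ENNReal.ofReal p₀ ≤ μ {x | c₀ * opNorm M ≤ (∑ a, x a * ustar a) ^ 2})
    (zs : Fin n → Ω → (Fin d → ℝ))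
    (hmeas : ∀ i, Measurable (zs i))
    (hindep : iIndepFun zs P)
    (hlaw : ∀ i, Measure.map (zs i) P = μ)
    (Z : Ω → Matrix (Fin d) (Fin n) ℝ)
    (hZ : ∀ ω (a : Fin d) (t : Fin n), Z ω a t = zs t ω a)
    (c : ℝ) (hc : c ∈ Set.Ioo (0:ℝ) (1/2))
    (hn : (8 / p₀) * Real.log (1 / c) ≤ (n : ℝ)) :
    ENNReal.ofReal (1 - 2 * c) ≤
      P {ω | Z ω ≠ 0 ∧
        stRank (Z ω) ≤ (2 / (p₀ * c₀ * c)) * (Matrix.trace M / opNorm M)} := by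
  classical
  obtain ⟨hp0, -⟩ := hp₀
  obtain ⟨hc0, hc2⟩ := hc
  obtain rfl : M = secondMoment μ := Matrix.ext hM
  obtain rfl : Z = fun ω => Matrix.of fun a t => zs t ω a := funext fun ω => Matrix.ext (hZ ω)
  set θ := c₀ * opNorm (secondMoment μ) with hθ_def
  set S := {x : Fin d → ℝ | θ ≤ (∑ a, x a * ustar a) ^ 2}
  have hS : MeasurableSet S := measurableSet_le measurable_const (by fun_prop)
  have hθ : 0 < θ := mul_pos hc₀ (opNorm_pos hM0)
  have hn0 : (0 : ℝ) < n :=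
    (mul_pos (by positivity) (Real.log_pos (by rw [lt_div_iff₀ hc0]; linarith))).trans_le hn
  have hE := integral_frobSq_of_map_eq hmeas hlaw fun a => hmoment a a
  rw [Fintype.card_fin] at hE
  have hfrob := measure_integral_div_le_le (fun ω => by unfold frobSq; positivity)
    (integrable_frobSq_of_map_eq hmeas hlaw fun a => hmoment a a)
    (hE ▸ mul_pos hn0 (trace_secondMoment_pos hmoment hM0)) hc0
  rw [hE] at hfrob
  have hcount := measure_card_mem_le_le_exp hmeas hindep hS hp0.le fun i => by
    rwa [← Measure.map_apply (hmeas i) hS, hlaw i]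
  rw [Fintype.card_fin] at hcount
  have hexp := exp_neg_mul_div_le_of_div_mul_log_le (by norm_num) hp0 hc0 hn
  refine ofReal_one_sub_le_measure (by positivity) ?_
  calc _ ≤ _ := measure_mono ?_
    _ ≤ ENNReal.ofReal c + ENNReal.ofReal c := (measure_union_le _ _).trans <|
      add_le_add hfrob (hcount.trans (ENNReal.ofReal_le_ofReal hexp))
    _ = ENNReal.ofReal (2 * c) := by rw [← ENNReal.ofReal_add hc0.le hc0.le, two_mul]
  rw [Set.compl_subset_comm, Set.compl_union]
  rintro ω ⟨hF, hN⟩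
  simp only [Set.mem_compl_iff, Set.mem_ofPred_eq, not_le] at hF hN
  refine ne_zero_and_stRank_le hu hθ (by positivity) hF.le (fun t => zs t ω ∈ S)
    (fun t ht => by simpa [S, vecMul, dotProduct, mul_comm] using ht) hN.le |>.imp_right
    fun hst => hst.trans_eq ?_
  rw [hθ_def]
  field_simp

/-- Constant-probability stable-rank bound from a small-ball condition:
if `P(⟨z,u⋆⟩² ≥ c₀‖M‖_op) ≥ p₀` for some unit `u⋆`, then for `c ∈ (0,1/2)` and
`n ≥ (8/p₀)·log(1/c)`, with probability at least `1 − 2c`, `Z_n ≠ 0` and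
`st(Z_n) ≤ (2/(p₀c₀c))·er(M)`. -/
theorem stable_rank_small_ball
    {Ω : Type*} [MeasurableSpace Ω] (P : Measure Ω) [IsProbabilityMeasure P]
    (d n : ℕ) (hd : 0 < d)
    (μ : Measure (Fin d → ℝ)) [IsProbabilityMeasure μ]
    (hmoment : ∀ a b : Fin d, Integrable (fun x => x a * x b) μ)
    (M : Matrix (Fin d) (Fin d) ℝ)
    (hM : ∀ a b, M a b = ∫ x, x a * x b ∂μ)
    (hM0 : M ≠ 0)
    (ustar : Fin d → ℝ) (hu : ∑ a, (ustar a) ^ 2 = 1)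
    (p₀ c₀ : ℝ) (hp₀ : p₀ ∈ Set.Ioo (0:ℝ) 1) (hc₀ : 0 < c₀)
    (hsb : ENNReal.ofReal p₀ ≤ μ {x | c₀ * opNorm M ≤ (∑ a, x a * ustar a) ^ 2})
    (zs : Fin n → Ω → (Fin d → ℝ))
    (hmeas : ∀ i, Measurable (zs i))
    (hindep : iIndepFun zs P)
    (hlaw : ∀ i, Measure.map (zs i) P = μ)
    (Z : Ω → Matrix (Fin d) (Fin n) ℝ)
    (hZ : ∀ ω (a : Fin d) (t : Fin n), Z ω a t = zs t ω a)
    (c : ℝ) (hc : c ∈ Set.Ioo (0:ℝ) (1/2))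
    (hn : (8 / p₀) * Real.log (1 / c) ≤ (n : ℝ)) :
    ENNReal.ofReal (1 - 2 * c) ≤
      P {ω | Z ω ≠ 0 ∧
        stRank (Z ω) ≤ (2 / (p₀ * c₀ * c)) * (Matrix.trace M / opNorm M)} :=
  stable_rank_small_ball_general P d n μ hmoment M hM hM0 ustar hu p₀ c₀ hp₀ hc₀ hsb zs hmeas hindep
    hlaw Z hZ c hc hn
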